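/- Let q be a rational with 0 < q < 1 and q ≠ 1/2, and let (p, r) with 0 ≤ p < q < r ≤ 1 be its unique compatible parent pair (so p ⊕ r = q). Then the reduced denominators of p and r are distinct, and: if p.den > r.den then r is the right parent of p (i.e. there exists a rational s with 0 ≤ s < p such that s and r are compatible and s ⊕ r = p), while if r.den > p.den then p is the left parent of r (i.e. there exists a rational s with r < s ≤ 1 such that p and s are compatible and p ⊕ s = r). -/

import Mathlib

/-! Write `p = a/b < r = c/d` in lowest terms, so compatibility reads `c b - a d = 1`.
If `b > d`, the fraction `s = (a - c)/(b - d)` satisfies the same relation with `r`, hence is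
in lowest terms, and `s ⊕ r = p`; symmetrically `(c - a)/(d - b)` works when `d > b`. Equal
denominators force `b (c - a) = 1`, i.e. `p = 0`, `r = 1` and `q = 1/2`. -/

/-- Rationals `p, q` (in reduced form) are compatible if `|p.num * q.den - q.num * p.den| = 1`. -/
def FareyCompatible (p q : ℚ) : Prop :=
  |p.num * (q.den : ℤ) - q.num * (p.den : ℤ)| = 1

/-- The Farey sum (mediant) of two rationals, as a rational number. -/
def fareySum (p q : ℚ) : ℚ :=
  ((p.num : ℚ) + (q.num : ℚ)) / ((p.den : ℚ) + (q.den : ℚ))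

lemma exists_rat_num_den_eq_of_isCoprime {n m : ℤ} (hm : 0 < m) (h : IsCoprime n m) :
    ∃ s : ℚ, s.num = n ∧ (s.den : ℤ) = m := by
  have hcop : n.natAbs.Coprime m.natAbs := Int.isCoprime_iff_gcd_eq_one.mp h
  exact ⟨n / m, Rat.num_div_eq_of_coprime hm hcop, Rat.den_div_eq_of_coprime hm hcop⟩

section FareyNeighbours

variable {p r : ℚ}

lemma FareyCompatible.det_eq_one (h : FareyCompatible p r) (hpr : p < r) :
    r.num * p.den - p.num * r.den = 1 := by
  have hlt := (Rat.lt_iff p r).mp hpr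
  rcases (abs_eq zero_le_one).mp h with h | h <;> linarith

lemma fareyCompatible_of_det_eq_one (h : r.num * p.den - p.num * r.den = 1) :
    FareyCompatible p r := by
  rw [FareyCompatible, abs_eq zero_le_one]
  right
  linarith

lemma fareySum_eq_of_num_add_of_den_add {s : ℚ} (hnum : p.num + r.num = s.num)
    (hden : p.den + r.den = s.den) : fareySum p r = s := by
  rw [fareySum, ← Rat.num_div_den s, ← hnum, ← hden]
  push_cast
  rfl

lemma eq_zero_and_eq_one_of_den_eq (hdet : r.num * p.den - p.num * r.den = 1) (hp : 0 ≤ p)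
    (hr : r ≤ 1) (hden : p.den = r.den) : p = 0 ∧ r = 1 := by
  rw [← hden] at hdet
  have hp_den : (p.den : ℤ) = 1 :=
    Int.eq_one_of_mul_eq_one_right (b := r.num - p.num) (by positivity) (by linear_combination hdet)
  have hr_den : (r.den : ℤ) = 1 := by rw [← hden, hp_den]
  have hp_num := Rat.num_nonneg.mpr hp
  have hr_num := Rat.num_le_denom_iff.mpr hr
  rw [hp_den] at hdet
  rw [hr_den] at hr_num
  have hp_zero : p.num = 0 := by linarith
  have hr_one : r.num = 1 := by linarith
  constructor
  · exact Rat.zero_iff_num_zero.mpr hp_zero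
  · exact Rat.ext hr_one (by exact_mod_cast hr_den)

lemma exists_fareySum_eq_left_of_den_lt (hdet : r.num * p.den - p.num * r.den = 1) (hr : 0 < r)
    (hden : r.den < p.den) :
    ∃ s : ℚ, 0 ≤ s ∧ s < p ∧ FareyCompatible s r ∧ fareySum s r = p := by
  have hden' : (r.den : ℤ) < p.den := by exact_mod_cast hden
  obtain ⟨s, hs_num, hs_den⟩ := exists_rat_num_den_eq_of_isCoprime (n := p.num - r.num)
    (m := p.den - r.den) (by omega) ⟨-r.den, r.num, by linear_combination hdet⟩
  have hr_num := Rat.num_pos.mpr hr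
  refine ⟨s, ?_, ?_, ?_, ?_⟩
  · -- `(a - c) d = c (b - d) - 1 ≥ 0`
    refine Rat.num_nonneg.mp (nonneg_of_mul_nonneg_left (b := (r.den : ℤ)) ?_ (by positivity))
    rw [hs_num]
    nlinarith
  · rw [Rat.lt_iff, hs_num, hs_den]
    linarith
  · exact fareyCompatible_of_det_eq_one (by rw [hs_num, hs_den]; linear_combination hdet)
  · exact fareySum_eq_of_num_add_of_den_add (by rw [hs_num]; ring)
      (by zify; rw [hs_den]; ring)

lemma exists_fareySum_eq_right_of_den_lt (hdet : r.num * p.den - p.num * r.den = 1)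
    (hr : r ≤ 1) (hden : p.den < r.den) :
    ∃ s : ℚ, r < s ∧ s ≤ 1 ∧ FareyCompatible p s ∧ fareySum p s = r := by
  have hden' : (p.den : ℤ) < r.den := by exact_mod_cast hden
  obtain ⟨s, hs_num, hs_den⟩ := exists_rat_num_den_eq_of_isCoprime (n := r.num - p.num)
    (m := r.den - p.den) (by omega) ⟨p.den, -p.num, by linear_combination hdet⟩
  have hr_lt : r.num < r.den := Rat.num_lt_denom_iff.mpr (hr.lt_of_ne (by rintro rfl; simp at hden))
  refine ⟨s, ?_, ?_, ?_, ?_⟩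
  · rw [Rat.lt_iff, hs_num, hs_den]
    linarith
  · -- `d ((d - b) - (c - a)) = (d - c)(d - b) - 1 ≥ 0`
    refine Rat.num_le_denom_iff.mp (le_of_mul_le_mul_left (a := (r.den : ℤ)) ?_ (by positivity))
    rw [hs_num, hs_den]
    nlinarith
  · exact fareyCompatible_of_det_eq_one (by rw [hs_num, hs_den]; linear_combination hdet)
  · exact fareySum_eq_of_num_add_of_den_add (by rw [hs_num]; ring)
      (by zify; rw [hs_den]; ring)

end FareyNeighbours

theorem parent_of_parent_general (q p r : ℚ) (hq : q ≠ 1 / 2)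
    (hp0 : 0 ≤ p) (hpq : p < q) (hqr : q < r) (hr1 : r ≤ 1)
    (hcompat : FareyCompatible p r) (hsum : fareySum p r = q) :
    p.den ≠ r.den ∧
      (r.den < p.den →
        ∃ s : ℚ, 0 ≤ s ∧ s < p ∧ FareyCompatible s r ∧ fareySum s r = p) ∧
      (p.den < r.den →
        ∃ s : ℚ, r < s ∧ s ≤ 1 ∧ FareyCompatible p s ∧ fareySum p s = r) := by
  have hpr : p < r := hpq.trans hqr
  have hdet := hcompat.det_eq_one hpr
  refine ⟨fun hden => hq ?_, exists_fareySum_eq_left_of_den_lt hdet (hp0.trans_lt hpr),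
    exists_fareySum_eq_right_of_den_lt hdet hr1⟩
  obtain ⟨rfl, rfl⟩ := eq_zero_and_eq_one_of_den_eq hdet hp0 hr1 hden
  rw [← hsum]
  norm_num [fareySum]

/-- For `q ≠ 1/2` in `(0,1)` with parent pair `(p, r)`, the parents have distinct
denominators; the parent with larger denominator has the other parent's partner as
its own parent: if `p.den > r.den` then `r` is the right parent of `p`, and if
`r.den > p.den` then `p` is the left parent of `r`. -/
theorem parent_of_parent (q p r : ℚ) (h0 : 0 < q) (h1 : q < 1) (hq : q ≠ 1 / 2)
    (hp0 : 0 ≤ p) (hpq : p < q) (hqr : q < r) (hr1 : r ≤ 1)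
    (hcompat : FareyCompatible p r) (hsum : fareySum p r = q) :
    p.den ≠ r.den ∧
      (r.den < p.den →
        ∃ s : ℚ, 0 ≤ s ∧ s < p ∧ FareyCompatible s r ∧ fareySum s r = p) ∧
      (p.den < r.den →
        ∃ s : ℚ, r < s ∧ s ≤ 1 ∧ FareyCompatible p s ∧ fareySum p s = r) :=
  parent_of_parent_general q p r hq hp0 hpq hqr hr1 hcompat hsum
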